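/- In any graph G of independence number at least 2, the set {1, 1+a+b, 1−a−b} (computed in ℤ/nℤ) witnesses: if this set is independent in the circulant graph C_n(a,b), then C_n(a,b) is not W₂. -/

import Mathlib

/-- The circulant graph `C_n(S)` on `ℤ/nℤ`: vertices `i, j` are adjacent iff
`min{|i−j|, n−|i−j|} ∈ S`, i.e. iff `i − j` or `j − i` is congruent mod `n`
to an element of `S ⊆ {1, …, ⌊n/2⌋}`. -/
def circ (n : ℕ) (S : Set ℕ) : SimpleGraph (ZMod n) :=
  SimpleGraph.circulantGraph ((fun s : ℕ => (s : ZMod n)) '' S)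

/-- `s` is an independent set of `G`. -/
def IsIndep {V : Type*} (G : SimpleGraph V) (s : Finset V) : Prop :=
  ∀ ⦃u⦄, u ∈ s → ∀ ⦃w⦄, w ∈ s → ¬ G.Adj u w

/-- The independence number `α(G)`. -/
noncomputable def indepNum {V : Type*} [Fintype V] (G : SimpleGraph V) : ℕ :=
  sSup {k | ∃ s : Finset V, IsIndep G s ∧ s.card = k}

/-- `G` is a W₂ graph: it has at least two vertices and every pair of disjoint
independent sets is contained in a pair of disjoint maximum independent sets. -/
def IsW2 {V : Type*} [Fintype V] (G : SimpleGraph V) : Prop :=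
  2 ≤ Fintype.card V ∧
  ∀ A B : Finset V, IsIndep G A → IsIndep G B → Disjoint A B →
    ∃ A' B' : Finset V, A ⊆ A' ∧ B ⊆ B' ∧ Disjoint A' B' ∧
      IsIndep G A' ∧ IsIndep G B' ∧ A'.card = _root_.indepNum G ∧ B'.card = _root_.indepNum G

/-- The disjoint union of `d` copies of the graph `G`. -/
def copies {V : Type*} (d : ℕ) (G : SimpleGraph V) : SimpleGraph (Fin d × V) where
  Adj p q := p.1 = q.1 ∧ G.Adj p.2 q.2
  symm := ⟨fun p q h => ⟨h.1.symm, h.2.symm⟩⟩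
  loopless := ⟨fun p h => G.loopless.irrefl _ h.2⟩

/-! If an independent set `B` misses `v` but dominates every neighbour of `v`, then `{v}` and `B`
are disjoint independent sets that cannot both be extended: a maximum independent set `B' ⊇ B`
avoiding `v` must contain a neighbour of `v` (otherwise `insert v B'` is larger), and that
neighbour is adjacent to a vertex of `B ⊆ B'`. In `C_n(a,b)` every neighbour `v ± a`, `v ± b` of `v`
is adjacent to `v + a + b` or to `v - a - b`, so `B = {1 + a + b, 1 - a - b}` does the job. -/

section IndependentSets

variable {V : Type*} {G : SimpleGraph V}

lemma IsIndep.mono {s t : Finset V} (ht : IsIndep G t) (hst : s ⊆ t) : IsIndep G s :=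
  fun _ hu _ hw => ht (hst hu) (hst hw)

lemma isIndep_singleton (v : V) : IsIndep G {v} := by
  intro u hu w hw
  rw [Finset.mem_singleton] at hu hw
  subst hu hw
  exact G.loopless.irrefl _

lemma IsIndep.insert [DecidableEq V] {s : Finset V} {v : V} (hs : IsIndep G s)
    (hv : ∀ w ∈ s, ¬ G.Adj v w) : IsIndep G (insert v s) := by
  intro u hu w hw
  rw [Finset.mem_insert] at hu hw
  rcases hu with rfl | hu <;> rcases hw with rfl | hw
  · exact G.loopless.irrefl _
  · exact hv w hw
  · exact fun h => hv u hu h.symm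
  · exact hs hu hw

variable [Fintype V]

lemma IsIndep.card_le_indepNum {s : Finset V} (hs : IsIndep G s) : s.card ≤ indepNum G :=
  le_csSup ⟨Fintype.card V, by rintro k ⟨t, -, rfl⟩; exact t.card_le_univ⟩ ⟨s, hs, rfl⟩

lemma IsIndep.exists_adj_of_card_eq_indepNum {s : Finset V} (hs : IsIndep G s)
    (hcard : s.card = indepNum G) {v : V} (hv : v ∉ s) : ∃ w ∈ s, G.Adj v w := by
  classical
  by_contra! h
  have := (hs.insert h).card_le_indepNum
  rw [Finset.card_insert_of_notMem hv, hcard] at this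
  omega

lemma not_isW2_of_forall_adj_exists_adj {B : Finset V} (hB : IsIndep G B) {v : V} (hv : v ∉ B)
    (hdom : ∀ w, G.Adj v w → ∃ u ∈ B, G.Adj w u) : ¬ IsW2 G := by
  rintro ⟨-, hW⟩
  obtain ⟨A', B', hvA', hBB', hdisj, -, hB', -, hcard⟩ :=
    hW {v} B (isIndep_singleton v) hB (Finset.disjoint_singleton_left.mpr hv)
  have hvB' : v ∉ B' := Finset.disjoint_left.mp hdisj (hvA' (Finset.mem_singleton_self v))
  obtain ⟨w, hwB', hvw⟩ := hB'.exists_adj_of_card_eq_indepNum hcard hvB'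
  obtain ⟨u, huB, hwu⟩ := hdom w hvw
  exact hB' hwB' (hBB' huB) hwu

end IndependentSets

section Circulant

open SimpleGraph

variable {G : Type*} [AddCommGroup G] {a b : G}

lemma circulantGraph_pair_adj_iff {x y : G} :
    (circulantGraph {a, b}).Adj x y ↔
      x ≠ y ∧ (x - y = a ∨ x - y = b ∨ y - x = a ∨ y - x = b) := by
  simp only [circulantGraph_adj, Set.mem_insert_iff, Set.mem_singleton_iff]
  tauto

lemma circulantGraph_pair_adj_add_add_or_sub_sub (ha : a ≠ 0) (hb : b ≠ 0) {x w : G}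
    (hxw : (circulantGraph {a, b}).Adj x w) :
    (circulantGraph {a, b}).Adj w (x + a + b) ∨ (circulantGraph {a, b}).Adj w (x - a - b) := by
  simp only [circulantGraph_pair_adj_iff] at hxw ⊢
  obtain ⟨-, h | h | h | h⟩ := hxw
  · refine Or.inr ⟨fun e => hb ?_, Or.inr (Or.inl ?_)⟩ <;> grind
  · refine Or.inr ⟨fun e => ha ?_, Or.inl ?_⟩ <;> grind
  · refine Or.inl ⟨fun e => hb ?_, Or.inr (Or.inr (Or.inr ?_))⟩ <;> grind
  · refine Or.inl ⟨fun e => ha ?_, Or.inr (Or.inr (Or.inl ?_))⟩ <;> grind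

end Circulant

lemma circ_pair (n a b : ℕ) :
    circ n {a, b} = SimpleGraph.circulantGraph {(a : ZMod n), (b : ZMod n)} := by
  rw [circ, Set.image_pair]

lemma natCast_ne_zero_of_pos_of_lt {n k : ℕ} (hk : 0 < k) (hkn : k < n) : (k : ZMod n) ≠ 0 := by
  rw [Ne, ZMod.natCast_eq_zero_iff]
  exact fun h => absurd (Nat.le_of_dvd hk h) (by omega)

theorem stmt_16_general (n a b : ℕ) [NeZero n] (ha : 1 ≤ a) (hab : a < b)
    (hb : 2 * b < n)
    (hindep : IsIndep (circ n {a, b})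
      {(1 : ZMod n), 1 + (a : ZMod n) + (b : ZMod n),
        1 - (a : ZMod n) - (b : ZMod n)}) :
    ¬ IsW2 (circ n {a, b}) := by
  have ha0 : (a : ZMod n) ≠ 0 := natCast_ne_zero_of_pos_of_lt (by omega) (by omega)
  have hb0 : (b : ZMod n) ≠ 0 := natCast_ne_zero_of_pos_of_lt (by omega) (by omega)
  have hab0 : (a : ZMod n) + b ≠ 0 := by
    exact_mod_cast natCast_ne_zero_of_pos_of_lt (n := n) (k := a + b) (by omega) (by omega)
  refine not_isW2_of_forall_adj_exists_adj (B := {1 + (a : ZMod n) + b, 1 - (a : ZMod n) - b})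
    (hindep.mono (by simp [Finset.subset_iff])) (v := 1) ?_ fun w hw => ?_
  · simp only [Finset.mem_insert, Finset.mem_singleton, not_or]
    exact ⟨fun h => hab0 (by linear_combination -h), fun h => hab0 (by linear_combination h)⟩
  · rw [circ_pair] at hw ⊢
    rcases circulantGraph_pair_adj_add_add_or_sub_sub ha0 hb0 hw with h | h <;>
      exact ⟨_, by simp, h⟩

theorem stmt_16 (n a b : ℕ) [NeZero n] (ha : 1 ≤ a) (hab : a < b)
    (hb : 2 * b < n) (halpha : 2 ≤ _root_.indepNum (circ n {a, b}))
    (hindep : IsIndep (circ n {a, b})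
      {(1 : ZMod n), 1 + (a : ZMod n) + (b : ZMod n),
        1 - (a : ZMod n) - (b : ZMod n)}) :
    ¬ IsW2 (circ n {a, b}) :=
  stmt_16_general n a b ha hab hb hindep
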